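/- Let p_1,…,p_N be probability densities on Θ (all positive, mutually absolutely continuous). The weights ν = (ν_1,…,ν_N) with ν_i ≥ 0, Σν_i = 1, minimizing Σ_{i=1}^N KL(q_ν, p_i), where q_ν(θ) ∝ ∏_i p_i(θ)^{ν_i} is the logarithmic pool with weights ν, are the equal weights ν_i = 1/N. -/

import Mathlib

open MeasureTheory Real Finset

/-- KL divergence between densities `q` and `r` w.r.t. base measure `μ`. -/
noncomputable def KLd {Θ : Type*} [MeasurableSpace Θ] (μ : Measure Θ) (q r : Θ → ℝ) : ℝ :=
  ∫ θ, q θ * Real.log (q θ / r θ) ∂μ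

/-! For any positive probability density `q`, writing `log q_eq` as the average of the
`log pᵢ` minus `log Z_eq` gives `∑ᵢ KL(q, pᵢ) = N · KL(q, q_eq) - N log Z_eq`.
Gibbs' inequality `KL(q, q_eq) ≥ 0`, with equality at `q = q_eq`, finishes the proof. -/

theorem Real.sub_le_mul_log_div {x y : ℝ} (hx : 0 ≤ x) (hy : 0 < y) :
    x - y ≤ x * log (x / y) := by
  have h := InformationTheory.klFun_nonneg (div_nonneg hx hy.le)
  rw [InformationTheory.klFun] at h
  have h' := mul_nonneg hy.le h
  rw [mul_sub, mul_add, ← mul_assoc, mul_div_cancel₀ x hy.ne', mul_one] at h'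
  linarith

theorem Real.log_prod_rpow {ι : Type*} (s : Finset ι) {x : ι → ℝ} (hx : ∀ i, 0 < x i)
    (w : ι → ℝ) : log (∏ i ∈ s, x i ^ w i) = ∑ i ∈ s, w i * log (x i) := by
  rw [log_prod fun i _ => (rpow_pos_of_pos (hx i) _).ne']
  exact sum_congr rfl fun i _ => log_rpow (hx i) _

theorem Real.sum_log_eq_card_mul_log_geom_mean_div {ι : Type*} [Fintype ι] [Nonempty ι]
    {x : ι → ℝ} (hx : ∀ i, 0 < x i) {z : ℝ} (hz : 0 < z) :
    ∑ i, log (x i) =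
      Fintype.card ι * (log ((∏ i, x i ^ (1 / (Fintype.card ι : ℝ))) / z) + log z) := by
  have hcard : (Fintype.card ι : ℝ) ≠ 0 := Nat.cast_ne_zero.mpr Fintype.card_ne_zero
  rw [log_div (prod_pos fun i _ => rpow_pos_of_pos (hx i) _).ne' hz.ne', log_prod_rpow _ hx,
    ← mul_sum, sub_add_cancel, ← mul_assoc, mul_one_div_cancel hcard, one_mul]

theorem card_mul_mul_log_div_eq {ι : Type*} [Fintype ι] {x z c : ℝ} {y : ι → ℝ}
    (hx : 0 < x) (hy : ∀ i, 0 < y i) (hz : 0 < z)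
    (hlog : ∑ i, log (y i) = Fintype.card ι * (log z + c)) :
    Fintype.card ι * (x * log (x / z)) = ∑ i, x * log (x / y i) + Fintype.card ι * c * x := by
  simp only [log_div hx.ne' hz.ne', log_div hx.ne' (hy _).ne', mul_sub, sum_sub_distrib,
    ← mul_sum, hlog, sum_const, card_univ, nsmul_eq_mul]
  ring

section KL

variable {Θ : Type*} [MeasurableSpace Θ] {μ : Measure Θ}

theorem integrable_div_integral_of_integral_pos {g : Θ → ℝ} (hg : 0 < ∫ θ, g θ ∂μ) :
    Integrable (fun θ => g θ / ∫ θ, g θ ∂μ) μ ∧ ∫ θ, g θ / (∫ θ, g θ ∂μ) ∂μ = 1 :=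
  ⟨(Integrable.of_integral_ne_zero hg.ne').div_const _, by rw [integral_div, div_self hg.ne']⟩

theorem KLd_self (q : Θ → ℝ) : KLd μ q q = 0 := by
  refine integral_eq_zero_of_ae (ae_of_all _ fun θ => ?_)
  by_cases hq : q θ = 0 <;> simp [hq]

theorem KLd_nonneg {q r : Θ → ℝ} (hq : ∀ θ, 0 ≤ q θ) (hr : ∀ θ, 0 < r θ)
    (hq_int : Integrable q μ) (hr_int : Integrable r μ)
    (hmass : ∫ θ, r θ ∂μ ≤ ∫ θ, q θ ∂μ) : 0 ≤ KLd μ q r := by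
  by_cases hint : Integrable (fun θ => q θ * log (q θ / r θ)) μ
  · calc 0 ≤ ∫ θ, q θ - r θ ∂μ := by rw [integral_sub hq_int hr_int]; linarith
      _ ≤ KLd μ q r :=
        integral_mono (hq_int.sub hr_int) hint fun θ => sub_le_mul_log_div (hq θ) (hr θ)
  · rw [KLd, integral_undef hint]

/-- `hlog` says that `r` is the geometric mean of the `p i` divided by `exp c`. -/
theorem card_mul_KLd_eq_sum_KLd_add {ι : Type*} [Fintype ι] {p : ι → Θ → ℝ}
    {q r : Θ → ℝ} {c : ℝ} (hp : ∀ i θ, 0 < p i θ) (hq : ∀ θ, 0 < q θ) (hr : ∀ θ, 0 < r θ)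
    (hlog : ∀ θ, ∑ i, log (p i θ) = Fintype.card ι * (log (r θ) + c))
    (hq_int : Integrable q μ) (hq_mass : ∫ θ, q θ ∂μ = 1)
    (hKL_int : ∀ i, Integrable (fun θ => q θ * log (q θ / p i θ)) μ) :
    Fintype.card ι * KLd μ q r = ∑ i, KLd μ q (p i) + Fintype.card ι * c := by
  simp only [KLd]
  rw [← integral_const_mul, ← integral_finsetSum _ fun i _ => hKL_int i]
  simp only [card_mul_mul_log_div_eq (hq _) (fun i => hp i _) (hr _) (hlog _)]
  rw [integral_add (integrable_finsetSum _ fun i _ => hKL_int i) (hq_int.const_mul _),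
    integral_const_mul, hq_mass, mul_one]

end KL

theorem equal_weights_optimal_pooling_general
    {Θ : Type*} [MeasurableSpace Θ] (μ : Measure Θ) (N : ℕ) (hN : 0 < N)
    (p : Fin N → Θ → ℝ)
    (hp_pos : ∀ i θ, 0 < p i θ)
    -- normalized geometric mixtures, for every weight vector in the simplex
    (Z : (Fin N → ℝ) → ℝ)
    (hZ : ∀ ν, Z ν = ∫ θ, ∏ i, (p i θ) ^ (ν i) ∂μ)
    (qpool : (Fin N → ℝ) → Θ → ℝ)
    (hqpool : ∀ ν θ, qpool ν θ = (∏ i, (p i θ) ^ (ν i)) / Z ν)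
    (νeq : Fin N → ℝ) (hνeq : ∀ i, νeq i = 1 / N)
    (hZeq_pos : 0 < Z νeq)
    (hKLeq_int : ∀ i,
      Integrable (fun θ => qpool νeq θ * Real.log (qpool νeq θ / p i θ)) μ) :
    ∀ ν : Fin N → ℝ, (∀ i, 0 ≤ ν i) → ∑ i, ν i = 1 →
      0 < Z ν →
      (∀ i, Integrable (fun θ => qpool ν θ * Real.log (qpool ν θ / p i θ)) μ) →
      ∑ i, KLd μ (qpool νeq) (p i) ≤ ∑ i, KLd μ (qpool ν) (p i) := by
  intro ν _ _ hZν hKLν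
  have : Nonempty (Fin N) := ⟨⟨0, hN⟩⟩
  have hpool_pos (w) (hw : 0 < Z w) (θ) : 0 < qpool w θ :=
    hqpool w θ ▸ div_pos (prod_pos fun i _ => rpow_pos_of_pos (hp_pos i θ) _) hw
  have hpool_prob (w) (hw : 0 < Z w) :
      Integrable (qpool w) μ ∧ ∫ θ, qpool w θ ∂μ = 1 := by
    have hpool : qpool w = fun θ => (∏ i, p i θ ^ w i) / ∫ θ, ∏ i, p i θ ^ w i ∂μ :=
      funext fun θ => by rw [hqpool, hZ]
    exact hpool ▸ integrable_div_integral_of_integral_pos (hZ w ▸ hw)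
  have hlog (θ) :
      ∑ i, log (p i θ) = Fintype.card (Fin N) * (log (qpool νeq θ) + log (Z νeq)) := by
    simpa [hqpool, hνeq] using sum_log_eq_card_mul_log_geom_mean_div (hp_pos · θ) hZeq_pos
  have hsum_KLd (w) (hw : 0 < Z w)
      (hKL : ∀ i, Integrable (fun θ => qpool w θ * log (qpool w θ / p i θ)) μ) :=
    card_mul_KLd_eq_sum_KLd_add hp_pos (hpool_pos w hw) (hpool_pos νeq hZeq_pos) hlog
      (hpool_prob w hw).1 (hpool_prob w hw).2 hKL
  have h_eq := hsum_KLd νeq hZeq_pos hKLeq_int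
  rw [KLd_self, mul_zero] at h_eq
  have h_gibbs : 0 ≤ KLd μ (qpool ν) (qpool νeq) :=
    KLd_nonneg (fun θ => (hpool_pos ν hZν θ).le) (hpool_pos νeq hZeq_pos)
      (hpool_prob ν hZν).1 (hpool_prob νeq hZeq_pos).1
      (by rw [(hpool_prob ν hZν).2, (hpool_prob νeq hZeq_pos).2])
  linarith [hsum_KLd ν hZν hKLν, mul_nonneg (Nat.cast_nonneg (Fintype.card (Fin N))) h_gibbs]

/-- Among logarithmic pools `q_ν ∝ ∏ᵢ pᵢ^{νᵢ}` of positive densities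
`p₁,…,p_N`, the equal weights `νᵢ = 1/N` minimize the unweighted sum
`∑ᵢ KL(q_ν, pᵢ)`. -/
theorem equal_weights_optimal_pooling
    {Θ : Type*} [MeasurableSpace Θ] (μ : Measure Θ) (N : ℕ) (hN : 0 < N)
    (p : Fin N → Θ → ℝ) (hp_meas : ∀ i, Measurable (p i))
    (hp_pos : ∀ i θ, 0 < p i θ) (hp_int : ∀ i, ∫ θ, p i θ ∂μ = 1)
    -- normalized geometric mixtures, for every weight vector in the simplex
    (Z : (Fin N → ℝ) → ℝ)
    (hZ : ∀ ν, Z ν = ∫ θ, ∏ i, (p i θ) ^ (ν i) ∂μ)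
    (qpool : (Fin N → ℝ) → Θ → ℝ)
    (hqpool : ∀ ν θ, qpool ν θ = (∏ i, (p i θ) ^ (ν i)) / Z ν)
    (νeq : Fin N → ℝ) (hνeq : ∀ i, νeq i = 1 / N)
    (hZeq_pos : 0 < Z νeq)
    (hKLeq_int : ∀ i,
      Integrable (fun θ => qpool νeq θ * Real.log (qpool νeq θ / p i θ)) μ) :
    ∀ ν : Fin N → ℝ, (∀ i, 0 ≤ ν i) → ∑ i, ν i = 1 →
      0 < Z ν →
      (∀ i, Integrable (fun θ => qpool ν θ * Real.log (qpool ν θ / p i θ)) μ) →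
      ∑ i, KLd μ (qpool νeq) (p i) ≤ ∑ i, KLd μ (qpool ν) (p i) :=
  equal_weights_optimal_pooling_general μ N hN p hp_pos Z hZ qpool hqpool νeq hνeq hZeq_pos
    hKLeq_int
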